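/- arXiv:2310.06789 — 6 statements merged into one kernel-verified Lean document; each statement's English description precedes it below -/
import Mathlib

section
/- Let g : ℝⁿ → (-∞,∞] be proper closed convex, H a positive definite matrix, β > 0, x, y ∈ ℝⁿ, and x⁺ ∈ prox_g^H(x − H⁻¹∇f(x)). If f(x⁺) ≤ f(x) + ∇f(x)ᵀ(x⁺−x) + (β/2)‖x⁺−x‖²_H, then F(y) − F(x⁺) ≥ (1/2)‖y−x⁺‖²_H − (1/2)‖y−x‖²_H + ℓ_f(y,x) − ((β−1)/2)‖x⁺−x‖²_H, where F = f + g and ℓ_f(y,x) = f(y) − f(x) − ∇f(x)ᵀ(y−x). -/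
open scoped RealInnerProductSpace

/-- Reinterpret a plain vector as an element of Euclidean space. -/
noncomputable def toE {n : ℕ} (v : Fin n → ℝ) : EuclideanSpace ℝ (Fin n) :=
  (WithLp.equiv 2 _).symm v

/-- The squared scaled norm `‖z‖²_H = zᵀHz`. -/
noncomputable def qnorm {n : ℕ} (H : Matrix (Fin n) (Fin n) ℝ)
    (z : EuclideanSpace ℝ (Fin n)) : ℝ :=
  dotProduct (fun i => z i) (H.mulVec (fun i => z i))

/-- `xp` is a point of the scaled proximal mapping `prox_g^H(u)`, i.e. a minimizer of
`y ↦ g(y) + (1/2)‖y − u‖²_H`. -/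
def IsProxPt {n : ℕ} (g : EuclideanSpace ℝ (Fin n) → EReal)
    (H : Matrix (Fin n) (Fin n) ℝ) (u xp : EuclideanSpace ℝ (Fin n)) : Prop :=
  ∀ y, g xp + (((1:ℝ)/2 * qnorm H (xp - u) : ℝ) : EReal)
      ≤ g y + (((1:ℝ)/2 * qnorm H (y - u) : ℝ) : EReal)

/-! The prox point `xp` of `u` satisfies the variational inequality
`g xp ≤ g y + ⟪H (xp - u), y - xp⟫`: compare `xp` with the points `xp + t (y - xp)` of the
segment, bound `g` there by convexity, divide by `t` and let `t → 0`. For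
`u = x - H⁻¹ ∇f(x)` this reads `g xp ≤ g y + ⟪H (xp - x), y - xp⟫ + ⟪∇f(x), y - xp⟫`; adding the
descent inequality for `f` and the three-point identity
`‖y - x‖²_H = ‖xp - x‖²_H + 2 ⟪H (xp - x), y - xp⟫ + ‖y - xp‖²_H` gives the claim. -/

open Filter Topology

section InnerProductSpace

variable {E : Type*} [NormedAddCommGroup E] [InnerProductSpace ℝ E]

lemma LinearMap.IsSymmetric.inner_add_map_add {T : E →ₗ[ℝ] E} (hT : T.IsSymmetric) (a b : E) :
    ⟪a + b, T (a + b)⟫ = ⟪a, T a⟫ + 2 * ⟪T a, b⟫ + ⟪b, T b⟫ := by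
  rw [map_add, inner_add_left, inner_add_right, inner_add_right, ← hT a b, real_inner_comm (T a) b]
  ring

lemma le_of_forall_le_add_mul {a b c : ℝ} (h : ∀ t : ℝ, 0 < t → t ≤ 1 → a ≤ b + t * c) :
    a ≤ b := by
  have hcont : Continuous fun t : ℝ => b + t * c := by fun_prop
  refine ge_of_tendsto
    ((hcont.tendsto' 0 b (by simp)).mono_left (nhdsWithin_le_nhds (s := Set.Ioi 0))) ?_
  filter_upwards [Ioc_mem_nhdsGT one_pos] with t ht using h t ht.1 ht.2

theorem prox_le_add_inner {g : E → EReal} {T : E →ₗ[ℝ] E} (hT : T.IsSymmetric)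
    (hg : ∀ (z w : E) (a b : ℝ), 0 ≤ a → 0 ≤ b → a + b = 1 →
      g (a • z + b • w) ≤ (a : EReal) * g z + (b : EReal) * g w)
    {u xp y : E}
    (hmin : ∀ z, g xp + ((1 / 2 * ⟪xp - u, T (xp - u)⟫ : ℝ) : EReal)
      ≤ g z + ((1 / 2 * ⟪z - u, T (z - u)⟫ : ℝ) : EReal))
    {s r : ℝ} (hs : g xp = s) (hr : g y = r) :
    s ≤ r + ⟪T (xp - u), y - xp⟫ := by
  refine le_of_forall_le_add_mul (c := ⟪y - xp, T (y - xp)⟫ / 2) fun t ht ht1 => ?_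
  have hseg : (1 - t) • xp + t • y - u = (xp - u) + t • (y - xp) := by module
  have hcmp := (hmin ((1 - t) • xp + t • y)).trans
    (add_le_add_left (hg xp y (1 - t) t (by linarith) ht.le (by ring)) _)
  rw [hs, hr, hseg, hT.inner_add_map_add] at hcmp
  norm_cast at hcmp
  simp only [map_smul, inner_smul_left, inner_smul_right, RCLike.conj_to_real] at hcmp
  have hscaled : t * s ≤ t * (r + ⟪T (xp - u), y - xp⟫ + t * (⟪y - xp, T (y - xp)⟫ / 2)) := by
    linarith
  exact le_of_mul_le_mul_left hscaled ht

end InnerProductSpace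

lemma qnorm_eq_inner {n : ℕ} (H : Matrix (Fin n) (Fin n) ℝ) (z : EuclideanSpace ℝ (Fin n)) :
    qnorm H z = ⟪z, H.toEuclideanLin z⟫ :=
  dotProduct_comm _ _

lemma toEuclideanLin_toE_inv_mulVec {n : ℕ} {H : Matrix (Fin n) (Fin n) ℝ} (hH : IsUnit H)
    (v : EuclideanSpace ℝ (Fin n)) : H.toEuclideanLin (toE (H⁻¹.mulVec fun i => v i)) = v := by
  simp [toE, Matrix.toLpLin_apply, Matrix.mulVec_mulVec,
    Matrix.mul_nonsing_inv _ ((Matrix.isUnit_iff_isUnit_det H).mp hH)]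

lemma IsProxPt.ne_top {n : ℕ} {g : EuclideanSpace ℝ (Fin n) → EReal}
    {H : Matrix (Fin n) (Fin n) ℝ} {u xp z : EuclideanSpace ℝ (Fin n)} (hxp : IsProxPt g H u xp)
    (hz : g z ≠ ⊤) : g xp ≠ ⊤ := fun htop => by
  have h := hxp z
  rw [htop, EReal.top_add_coe, top_le_iff] at h
  exact EReal.add_ne_top hz (EReal.coe_ne_top _) h

theorem stmt3_general {n : ℕ} (f : EuclideanSpace ℝ (Fin n) → ℝ)
    (g : EuclideanSpace ℝ (Fin n) → EReal)
    (H : Matrix (Fin n) (Fin n) ℝ) (β : ℝ) (x y xp : EuclideanSpace ℝ (Fin n))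
    (hg_proper : ∃ z, g z ≠ ⊤) (hg_nebot : ∀ z, g z ≠ ⊥)
    (hg_convex : ∀ (z w : EuclideanSpace ℝ (Fin n)) (a b : ℝ), 0 ≤ a → 0 ≤ b →
      a + b = 1 → g (a • z + b • w) ≤ (a : EReal) * g z + (b : EReal) * g w)
    (hH : H.PosDef)
    (hxp : IsProxPt g H (x - toE (H⁻¹.mulVec fun i => gradient f x i)) xp)
    (hls : f xp ≤ f x + ⟪gradient f x, xp - x⟫ + β / 2 * qnorm H (xp - x)) :
    (f y : EReal) + g y - ((f xp : EReal) + g xp) ≥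
      (((1:ℝ)/2 * qnorm H (y - xp) - (1:ℝ)/2 * qnorm H (y - x)
        + (f y - f x - ⟪gradient f x, y - x⟫)
        - (β - 1) / 2 * qnorm H (xp - x) : ℝ) : EReal) := by
  have hT : H.toEuclideanLin.IsSymmetric :=
    Matrix.isSymmetric_toEuclideanLin_iff.mpr hH.isHermitian
  obtain ⟨z, hz⟩ := hg_proper
  obtain ⟨s, hs⟩ : ∃ s : ℝ, g xp = s :=
    ⟨_, (EReal.coe_toReal (hxp.ne_top hz) (hg_nebot xp)).symm⟩
  rcases eq_or_ne (g y) ⊤ with hy | hy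
  · rw [hy, hs, ← EReal.coe_add, EReal.coe_add_top, EReal.top_sub_coe]
    exact le_top
  obtain ⟨r, hr⟩ : ∃ r : ℝ, g y = r := ⟨_, (EReal.coe_toReal hy (hg_nebot y)).symm⟩
  have hvar := prox_le_add_inner hT hg_convex
    (fun w => by simpa only [qnorm_eq_inner] using hxp w) hs hr
  have hu : xp - (x - toE (H⁻¹.mulVec fun i => gradient f x i)) =
      (xp - x) + toE (H⁻¹.mulVec fun i => gradient f x i) := by
    abel
  have hprox : s ≤ r + ⟪H.toEuclideanLin (xp - x), y - xp⟫ + ⟪gradient f x, y - xp⟫ := by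
    rwa [hu, map_add, toEuclideanLin_toE_inv_mulVec hH.isUnit, inner_add_left, ← add_assoc] at hvar
  have hthree := hT.inner_add_map_add (xp - x) (y - xp)
  rw [sub_add_sub_cancel'] at hthree
  have hgrad : ⟪gradient f x, y - x⟫ = ⟪gradient f x, xp - x⟫ + ⟪gradient f x, y - xp⟫ := by
    rw [← inner_add_right, sub_add_sub_cancel']
  rw [hs, hr]
  norm_cast
  simp only [qnorm_eq_inner] at hls ⊢
  linarith

/-- fundamental prox inequality (Lemma 1 of the paper). -/
theorem stmt3 {n : ℕ} (f : EuclideanSpace ℝ (Fin n) → ℝ)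
    (g : EuclideanSpace ℝ (Fin n) → EReal)
    (H : Matrix (Fin n) (Fin n) ℝ) (β : ℝ) (x y xp : EuclideanSpace ℝ (Fin n))
    (hf : Differentiable ℝ f)
    (hg_proper : ∃ z, g z ≠ ⊤) (hg_nebot : ∀ z, g z ≠ ⊥)
    (hg_closed : LowerSemicontinuous g)
    (hg_convex : ∀ (z w : EuclideanSpace ℝ (Fin n)) (a b : ℝ), 0 ≤ a → 0 ≤ b →
      a + b = 1 → g (a • z + b • w) ≤ (a : EReal) * g z + (b : EReal) * g w)
    (hH : H.PosDef) (hβ : 0 < β)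
    (hxp : IsProxPt g H (x - toE (H⁻¹.mulVec fun i => gradient f x i)) xp)
    (hls : f xp ≤ f x + ⟪gradient f x, xp - x⟫ + β / 2 * qnorm H (xp - x)) :
    (f y : EReal) + g y - ((f xp : EReal) + g xp) ≥
      (((1:ℝ)/2 * qnorm H (y - xp) - (1:ℝ)/2 * qnorm H (y - x)
        + (f y - f x - ⟪gradient f x, y - x⟫)
        - (β - 1) / 2 * qnorm H (xp - x) : ℝ) : EReal) :=
  stmt3_general f g H β x y xp hg_proper hg_nebot hg_convex hH hxp hls
end

section
/- Let f be C² with ∇f L₁-Lipschitz, diag(∇²f(x)) ⪰ mI for some m > 0, η > 1, β > 0, and τ as defined below finite. For any x and any positive diagonal matrix D = diag(∇²f(x)), let k be any nonnegative integer with βη^k ≥ τ and x⁺ ∈ prox_g^{η^k D}(x − (η^k D)⁻¹∇f(x)). Then the backtracking acceptance criterion f(x⁺) ≤ f(x) + ∇f(x)ᵀ(x⁺−x) + (β/2)‖x⁺−x‖²_{η^k D} holds. -/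
open scoped RealInnerProductSpace

/-- Hessian quadratic form `vᵀ∇²f(x)v`. -/
noncomputable def hessQ {n : ℕ} (f : EuclideanSpace ℝ (Fin n) → ℝ)
    (x v : EuclideanSpace ℝ (Fin n)) : ℝ :=
  ⟪fderiv ℝ (gradient f) x v, v⟫

/-- The `i`-th diagonal entry of the Hessian of `f` at `x`. -/
noncomputable def hessDiag {n : ℕ} (f : EuclideanSpace ℝ (Fin n) → ℝ)
    (x : EuclideanSpace ℝ (Fin n)) (i : Fin n) : ℝ :=
  ⟪fderiv ℝ (gradient f) x (EuclideanSpace.single i (1 : ℝ)),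
    EuclideanSpace.single i (1 : ℝ)⟫

/-- Quadratic form `vᵀ diag(∇²f(x)) v`. -/
noncomputable def diagQ {n : ℕ} (f : EuclideanSpace ℝ (Fin n) → ℝ)
    (x v : EuclideanSpace ℝ (Fin n)) : ℝ :=
  ∑ i, hessDiag f x i * (v i) ^ 2

/-!
Along the segment `t ↦ x + t (x⁺ - x)`, the second derivative of `f` is the Hessian form
`(x⁺ - x)ᵀ ∇²f(x + t(x⁺ - x)) (x⁺ - x)`, which the definition of `τ` bounds by
`τ ‖x⁺ - x‖²_D ≤ β ‖x⁺ - x‖²_{η^k D}`. A second-order Taylor bound on `[0, 1]` then gives the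
acceptance criterion.
-/

open scoped Gradient

theorem le_add_deriv_add_half_of_deriv2_le {φ ψ χ : ℝ → ℝ} {M : ℝ}
    (hφ : ∀ t, HasDerivAt φ (ψ t) t) (hψ : ∀ t, HasDerivAt ψ (χ t) t)
    (hχ : ∀ t ∈ Set.Icc (0 : ℝ) 1, χ t ≤ M) :
    φ 1 ≤ φ 0 + ψ 0 + M / 2 := by
  have hψ_le : ∀ t ∈ Set.Icc (0 : ℝ) 1, ψ t - ψ 0 ≤ M * (t - 0) := fun t ht =>
    (convex_Icc 0 1).image_sub_le_mul_sub_of_deriv_le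
      (fun s _ => (hψ s).continuousAt.continuousWithinAt)
      (fun s _ => (hψ s).differentiableAt.differentiableWithinAt)
      (fun s hs => (hψ s).deriv ▸ hχ s (interior_subset hs))
      0 (Set.left_mem_Icc.2 zero_le_one) t ht ht.1
  set G : ℝ → ℝ := fun s => φ s - ψ 0 * s - M * s ^ 2 / 2 with hG_def
  have hG : ∀ s, HasDerivAt G (ψ s - ψ 0 - M * s) s := fun s => by
    have hlin : HasDerivAt (fun s : ℝ => ψ 0 * s) (ψ 0) s :=
      ((hasDerivAt_id s).const_mul (ψ 0)).congr_deriv (mul_one _)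
    have hsq : HasDerivAt (fun s : ℝ => M * s ^ 2 / 2) (M * s) s :=
      (((hasDerivAt_pow 2 s).const_mul M).div_const 2).congr_deriv (by push_cast; ring)
    exact ((hφ s).sub hlin).sub hsq
  have hG_anti := (convex_Icc (0 : ℝ) 1).image_sub_le_mul_sub_of_deriv_le (C := 0)
    (fun s _ => (hG s).continuousAt.continuousWithinAt)
    (fun s _ => (hG s).differentiableAt.differentiableWithinAt)
    (fun s hs => by
      rw [(hG s).deriv]
      linarith [hψ_le s (interior_subset hs)])
    0 (Set.left_mem_Icc.2 zero_le_one) 1 (Set.right_mem_Icc.2 zero_le_one) zero_le_one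
  simp only [hG_def] at hG_anti
  linarith

theorem hasDerivAt_add_smul {E : Type*} [NormedAddCommGroup E] [NormedSpace ℝ E] (x v : E)
    (t : ℝ) : HasDerivAt (fun s : ℝ => x + s • v) v t := by
  simpa using ((hasDerivAt_id t).smul_const v).const_add x

section LineRestriction

variable {E : Type*} [NormedAddCommGroup E] [InnerProductSpace ℝ E] [CompleteSpace E]
  {f : E → ℝ} {x v : E}

theorem DifferentiableAt.hasDerivAt_comp_add_smul {t : ℝ}
    (hf : DifferentiableAt ℝ f (x + t • v)) :
    HasDerivAt (fun s : ℝ => f (x + s • v)) ⟪∇ f (x + t • v), v⟫ t := by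
  have h := hf.hasFDerivAt.comp_hasDerivAt t (hasDerivAt_add_smul x v t)
  rw [← InnerProductSpace.toDual_symm_apply] at h
  exact h

theorem DifferentiableAt.hasDerivAt_inner_gradient_comp_add_smul {t : ℝ}
    (hf : DifferentiableAt ℝ (∇ f) (x + t • v)) :
    HasDerivAt (fun s : ℝ => ⟪∇ f (x + s • v), v⟫) ⟪fderiv ℝ (∇ f) (x + t • v) v, v⟫ t := by
  simpa using (hf.hasFDerivAt.comp_hasDerivAt t (hasDerivAt_add_smul x v t)).inner ℝ
    (hasDerivAt_const t v)

theorem ContDiff.differentiable_gradient (hf : ContDiff ℝ 2 f) : Differentiable ℝ (∇ f) :=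
  ((InnerProductSpace.toDual ℝ E).symm.contDiff.comp
    (hf.fderiv_right (m := 1) (by norm_num))).differentiable one_ne_zero

theorem ContDiff.le_add_inner_gradient_add_half_of_hessian_le (hf : ContDiff ℝ 2 f) {M : ℝ}
    (hM : ∀ t ∈ Set.Icc (0 : ℝ) 1, ⟪fderiv ℝ (∇ f) (x + t • v) v, v⟫ ≤ M) :
    f (x + v) ≤ f x + ⟪∇ f x, v⟫ + M / 2 := by
  simpa using le_add_deriv_add_half_of_deriv2_le
    (fun t => (hf.differentiable two_ne_zero _).hasDerivAt_comp_add_smul)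
    (fun t => (hf.differentiable_gradient _).hasDerivAt_inner_gradient_comp_add_smul) hM

end LineRestriction

theorem qnorm_smul_diagonal {n : ℕ} (d : Fin n → ℝ) (c : ℝ) (z : EuclideanSpace ℝ (Fin n)) :
    qnorm (c • Matrix.diagonal d) z = c * ∑ i, d i * z i ^ 2 := by
  simp only [qnorm, dotProduct, Matrix.smul_mulVec, Pi.smul_apply, Matrix.mulVec_diagonal,
    smul_eq_mul, Finset.mul_sum]
  exact Finset.sum_congr rfl fun i _ => by ring

theorem hessQ_add_smul_le_mul_diagQ {n : ℕ} {f : EuclideanSpace ℝ (Fin n) → ℝ} {τ : ℝ}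
    (hτ : τ ∈ upperBounds {r : ℝ | ∃ (z v : EuclideanSpace ℝ (Fin n)) (lam : ℝ),
      v ≠ 0 ∧ lam ∈ Set.Icc (0:ℝ) 1 ∧ r = hessQ f (z + lam • v) v / diagQ f z v})
    (hpos : ∀ z v, v ≠ 0 → 0 < diagQ f z v) (z v : EuclideanSpace ℝ (Fin n)) {t : ℝ}
    (ht : t ∈ Set.Icc (0 : ℝ) 1) :
    hessQ f (z + t • v) v ≤ τ * diagQ f z v := by
  rcases eq_or_ne v 0 with rfl | hv
  · simp [hessQ, diagQ]
  · exact (div_le_iff₀ (hpos z v hv)).1 (hτ ⟨z, v, t, hv, ht, rfl⟩)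

theorem stmt5_general {n : ℕ} (f : EuclideanSpace ℝ (Fin n) → ℝ)
    (m η β τ : ℝ) (k : ℕ) (x xp : EuclideanSpace ℝ (Fin n))
    (hf : ContDiff ℝ 2 f)
    (hm : 0 < m)
    (hdiag : ∀ (z v : EuclideanSpace ℝ (Fin n)), m * ‖v‖ ^ 2 ≤ diagQ f z v)
    (hτ : IsLUB {r : ℝ | ∃ (z v : EuclideanSpace ℝ (Fin n)) (lam : ℝ),
      v ≠ 0 ∧ lam ∈ Set.Icc (0:ℝ) 1 ∧
      r = hessQ f (z + lam • v) v / diagQ f z v} τ)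
    (hk : β * η ^ k ≥ τ) :
    f xp ≤ f x + ⟪gradient f x, xp - x⟫
      + β / 2 * qnorm (η ^ k • Matrix.diagonal (hessDiag f x)) (xp - x) := by
  have hpos : ∀ z v, v ≠ 0 → 0 < diagQ f z v := fun z v hv =>
    (mul_pos hm (pow_pos (norm_pos_iff.2 hv) 2)).trans_le (hdiag z v)
  have hD : 0 ≤ diagQ f x (xp - x) := (mul_nonneg hm.le (sq_nonneg _)).trans (hdiag x _)
  have hhess (t : ℝ) (ht : t ∈ Set.Icc (0 : ℝ) 1) :
      hessQ f (x + t • (xp - x)) (xp - x) ≤ β * η ^ k * diagQ f x (xp - x) :=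
    (hessQ_add_smul_le_mul_diagQ hτ.1 hpos x _ ht).trans (mul_le_mul_of_nonneg_right hk hD)
  have key := hf.le_add_inner_gradient_add_half_of_hessian_le hhess
  rw [add_sub_cancel] at key
  rw [qnorm_smul_diagonal]
  unfold diagQ at key
  linarith

/-- if `βη^k ≥ τ` then the backtracking acceptance criterion holds for
`x⁺ ∈ prox_g^{η^k D}(x − (η^k D)⁻¹∇f(x))` with `D = diag(∇²f(x))`. -/
theorem stmt5 {n : ℕ} (f : EuclideanSpace ℝ (Fin n) → ℝ)
    (g : EuclideanSpace ℝ (Fin n) → EReal)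
    (L₁ m η β τ : ℝ) (k : ℕ) (x xp : EuclideanSpace ℝ (Fin n))
    (hf : ContDiff ℝ 2 f)
    (hlip : ∀ x y : EuclideanSpace ℝ (Fin n),
      ‖gradient f x - gradient f y‖ ≤ L₁ * ‖x - y‖)
    (hm : 0 < m)
    (hdiag : ∀ (z v : EuclideanSpace ℝ (Fin n)), m * ‖v‖ ^ 2 ≤ diagQ f z v)
    (hη : 1 < η) (hβ : 0 < β)
    (hτ : IsLUB {r : ℝ | ∃ (z v : EuclideanSpace ℝ (Fin n)) (lam : ℝ),
      v ≠ 0 ∧ lam ∈ Set.Icc (0:ℝ) 1 ∧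
      r = hessQ f (z + lam • v) v / diagQ f z v} τ)
    (hg_proper : ∃ z, g z ≠ ⊤) (hg_nebot : ∀ z, g z ≠ ⊥)
    (hg_closed : LowerSemicontinuous g)
    (hk : β * η ^ k ≥ τ)
    (hxp : IsProxPt g (η ^ k • Matrix.diagonal (hessDiag f x))
      (x - toE ((η ^ k • Matrix.diagonal (hessDiag f x))⁻¹.mulVec
        fun i => gradient f x i)) xp) :
    f xp ≤ f x + ⟪gradient f x, xp - x⟫
      + β / 2 * qnorm (η ^ k • Matrix.diagonal (hessDiag f x)) (xp - x) :=
  stmt5_general f m η β τ k x xp hf hm hdiag hτ hk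
end

section
/- Under the same setting as the sufficient decrease lemma but with g additionally convex and 0 < β < 2, one has the stronger inequality F(x^{t+1}) ≤ F(x^t) − ((2−β)/2)‖x^{t+1}−x^t‖²_H. -/
/-! Testing the minimality of the prox point `x⁺` of `u` against the points `x⁺ + a (y − x⁺)`,
convexity of `g` turns it into `g x⁺ ≤ g y + ⟨x⁺ − u, y − x⁺⟩_H + (a/2)‖y − x⁺‖²_H` for
`0 < a ≤ 1`, and letting `a → 0` gives the prox inequality `g x⁺ ≤ g y + ⟨x⁺ − u, y − x⁺⟩_H`.
For `u = xᵗ − H⁻¹∇f(xᵗ)` and `y = xᵗ` its last term is `−‖x⁺ − xᵗ‖²_H − ⟪∇f(xᵗ), x⁺ − xᵗ⟫`,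
which cancels the linear term of the descent inequality for `f` and leaves
`−(1 − β/2)‖x⁺ − xᵗ‖²_H`. -/

open scoped RealInnerProductSpace

open Set Filter Topology

noncomputable def qinner {n : ℕ} (H : Matrix (Fin n) (Fin n) ℝ)
    (z w : EuclideanSpace ℝ (Fin n)) : ℝ :=
  dotProduct (fun i => z i) (H.mulVec fun i => w i)

section qinner
variable {n : ℕ} {H : Matrix (Fin n) (Fin n) ℝ}

lemma qnorm_eq_qinner (z : EuclideanSpace ℝ (Fin n)) : qnorm H z = qinner H z z := rfl

lemma qinner_comm (hH : H.IsSymm) (z w : EuclideanSpace ℝ (Fin n)) :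
    qinner H z w = qinner H w z := by
  rw [qinner, qinner, Matrix.dotProduct_mulVec, ← Matrix.mulVec_transpose, hH.eq, dotProduct_comm]

lemma qinner_add_left (z z' w : EuclideanSpace ℝ (Fin n)) :
    qinner H (z + z') w = qinner H z w + qinner H z' w :=
  add_dotProduct _ _ _

lemma qinner_neg_right (z w : EuclideanSpace ℝ (Fin n)) :
    qinner H z (-w) = -qinner H z w := by
  simp [qinner, ← Pi.neg_def, Matrix.mulVec_neg]

lemma qnorm_add_smul (hH : H.IsSymm) (z d : EuclideanSpace ℝ (Fin n)) (a : ℝ) :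
    qnorm H (z + a • d) = qnorm H z + 2 * a * qinner H z d + a ^ 2 * qnorm H d := by
  have hsymm := qinner_comm hH d z
  have hcoord : (fun i => (z + a • d) i) = (fun i => z i) + a • fun i => d i := rfl
  simp only [qnorm_eq_qinner, qinner, hcoord] at hsymm ⊢
  simp only [Matrix.mulVec_add, Matrix.mulVec_smul, dotProduct_add, add_dotProduct,
    dotProduct_smul, smul_dotProduct, smul_eq_mul, hsymm]
  ring

lemma qinner_toE_inv_mulVec (hH : H.IsSymm) (hdet : IsUnit H.det)
    (G w : EuclideanSpace ℝ (Fin n)) :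
    qinner H (toE (H⁻¹.mulVec fun i => G i)) w = ⟪G, w⟫ := by
  have hG : H.mulVec (H⁻¹.mulVec fun i => G i) = fun i => G i := by
    rw [Matrix.mulVec_mulVec, Matrix.mul_nonsing_inv H hdet, Matrix.one_mulVec]
  rw [qinner_comm hH, qinner]
  change dotProduct _ (H.mulVec (H⁻¹.mulVec fun i => G i)) = _
  rw [hG, PiLp.inner_apply]
  simp [dotProduct, mul_comm]

lemma qinner_gradient_step (hH : H.IsSymm) (hdet : IsUnit H.det)
    (x xp G : EuclideanSpace ℝ (Fin n)) :
    qinner H (xp - (x - toE (H⁻¹.mulVec fun i => G i))) (x - xp) =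
      -qnorm H (xp - x) - ⟪G, xp - x⟫ := by
  rw [sub_sub_eq_add_sub, add_sub_right_comm, ← neg_sub xp x, qinner_add_left,
    qinner_neg_right, qinner_neg_right, qinner_toE_inv_mulVec hH hdet, qnorm_eq_qinner]
  ring

end qinner

lemma le_of_forall_mem_Ioc_le_add_mul {x y c : ℝ} (h : ∀ a ∈ Ioc (0 : ℝ) 1, x ≤ y + a * c) :
    x ≤ y := by
  have hlim : Tendsto (fun a => y + a * c) (𝓝[>] 0) (𝓝 y) := by
    have : Continuous fun a : ℝ => y + a * c := by fun_prop
    simpa using (this.tendsto 0).mono_left nhdsWithin_le_nhds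
  exact ge_of_tendsto hlim (eventually_of_mem (Ioc_mem_nhdsGT one_pos) h)

section IsProxPt
variable {n : ℕ} {H : Matrix (Fin n) (Fin n) ℝ} {g : EuclideanSpace ℝ (Fin n) → EReal}
  {u xp y : EuclideanSpace ℝ (Fin n)}

lemma IsProxPt.le_add_qinner_add_mul (hH : H.IsSymm) (hxp : IsProxPt g H u xp) {gp gy a : ℝ}
    (hp : g xp = gp) (hy : g y = gy) (ha : 0 < a)
    (hconv : g (a • y + (1 - a) • xp) ≤ (a : EReal) * g y + ((1 - a : ℝ) : EReal) * g xp) :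
    gp ≤ gy + qinner H (xp - u) (y - xp) + a * (qnorm H (y - xp) / 2) := by
  have hya : a • y + (1 - a) • xp - u = (xp - u) + a • (y - xp) := by module
  have hprox := hxp (a • y + (1 - a) • xp)
  rw [hya, qnorm_add_smul hH, hp] at hprox
  rw [hp, hy] at hconv
  have h := hprox.trans (add_le_add_left hconv _)
  norm_cast at h
  refine le_of_mul_le_mul_left ?_ ha
  linarith

lemma IsProxPt.le_add_qinner (hH : H.IsSymm)
    (hg_convex : ∀ (z w : EuclideanSpace ℝ (Fin n)) (a b : ℝ), 0 ≤ a → 0 ≤ b →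
      a + b = 1 → g (a • z + b • w) ≤ (a : EReal) * g z + (b : EReal) * g w)
    (hxp : IsProxPt g H u xp) (y : EuclideanSpace ℝ (Fin n)) :
    g xp ≤ g y + (qinner H (xp - u) (y - xp) : EReal) := by
  have hprox := hxp y
  induction hy : g y using EReal.rec with
  | bot =>
    rw [hy, EReal.bot_add, le_bot_iff, EReal.add_eq_bot_iff,
      or_iff_left (EReal.coe_ne_bot _)] at hprox
    simp [hprox]
  | top => simp
  | coe gy =>
    induction hp : g xp using EReal.rec with
    | bot => exact bot_le
    | top =>
      rw [hp, hy, EReal.top_add_coe, top_le_iff] at hprox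
      exact absurd hprox (EReal.coe_ne_top _)
    | coe gp =>
      refine EReal.coe_le_coe_iff.mpr
        (le_of_forall_mem_Ioc_le_add_mul (c := qnorm H (y - xp) / 2) fun a ha => ?_)
      exact hxp.le_add_qinner_add_mul hH hp hy ha.1
        (hg_convex y xp a (1 - a) ha.1.le (sub_nonneg.mpr ha.2) (add_sub_cancel a 1))

end IsProxPt

lemma EReal.coe_add_le_coe_add_sub_coe {a b c d : ℝ} {x y : EReal} (h : x ≤ y + b)
    (hab : a + b ≤ c - d) : (a : EReal) + x ≤ c + y - d := by
  have hshift : (c : EReal) + y - d = ((c - d : ℝ) : EReal) + y := by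
    induction y using EReal.rec with
    | bot => simp
    | top => simp [-EReal.coe_sub]
    | coe y => norm_cast; ring
  calc (a : EReal) + x ≤ a + (y + b) := by gcongr
    _ = ((a + b : ℝ) : EReal) + y := by rw [add_comm y, ← add_assoc, EReal.coe_add]
    _ ≤ ((c - d : ℝ) : EReal) + y := by gcongr
    _ = c + y - d := hshift.symm

theorem stmt8_general {n : ℕ} (f : EuclideanSpace ℝ (Fin n) → ℝ)
    (g : EuclideanSpace ℝ (Fin n) → EReal)
    (H : Matrix (Fin n) (Fin n) ℝ) (β : ℝ) (xt xp : EuclideanSpace ℝ (Fin n))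
    (hg_convex : ∀ (z w : EuclideanSpace ℝ (Fin n)) (a b : ℝ), 0 ≤ a → 0 ≤ b →
      a + b = 1 → g (a • z + b • w) ≤ (a : EReal) * g z + (b : EReal) * g w)
    (hH : H.PosDef)
    (hxp : IsProxPt g H (xt - toE (H⁻¹.mulVec fun i => gradient f xt i)) xp)
    (hls : f xp ≤ f xt + ⟪gradient f xt, xp - xt⟫ + β / 2 * qnorm H (xp - xt)) :
    (f xp : EReal) + g xp ≤
      (f xt : EReal) + g xt - (((2 - β) / 2 * qnorm H (xp - xt) : ℝ) : EReal) := by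
  have hsymm : H.IsSymm := Matrix.isHermitian_iff_isSymm.mp hH.isHermitian
  have hdet : IsUnit H.det := (Matrix.isUnit_iff_isUnit_det H).mp hH.isUnit
  have hprox := hxp.le_add_qinner hsymm hg_convex xt
  rw [qinner_gradient_step hsymm hdet] at hprox
  exact EReal.coe_add_le_coe_add_sub_coe hprox (by linarith)

/-- with `g` additionally convex and `0 < β < 2`, the stronger decrease
`F(x⁺) ≤ F(x) − ((2−β)/2)‖x⁺−x‖²_H` holds. -/
theorem stmt8 {n : ℕ} (f : EuclideanSpace ℝ (Fin n) → ℝ)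
    (g : EuclideanSpace ℝ (Fin n) → EReal)
    (H : Matrix (Fin n) (Fin n) ℝ) (β : ℝ) (xt xp : EuclideanSpace ℝ (Fin n))
    (hf : Differentiable ℝ f)
    (hg_proper : ∃ z, g z ≠ ⊤) (hg_nebot : ∀ z, g z ≠ ⊥)
    (hg_closed : LowerSemicontinuous g)
    (hg_convex : ∀ (z w : EuclideanSpace ℝ (Fin n)) (a b : ℝ), 0 ≤ a → 0 ≤ b →
      a + b = 1 → g (a • z + b • w) ≤ (a : EReal) * g z + (b : EReal) * g w)
    (hH : H.PosDef) (hβ0 : 0 < β) (hβ2 : β < 2)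
    (hxp : IsProxPt g H (xt - toE (H⁻¹.mulVec fun i => gradient f xt i)) xp)
    (hls : f xp ≤ f xt + ⟪gradient f xt, xp - xt⟫ + β / 2 * qnorm H (xp - xt)) :
    (f xp : EReal) + g xp ≤
      (f xt : EReal) + g xt - (((2 - β) / 2 * qnorm H (xp - xt) : ℝ) : EReal) :=
  stmt8_general f g H β xt xp hg_convex hH hxp hls
end

section
/- Let f(x) = (1/2)xᵀQx + lᵀx with Q positive definite, D = diag(Q), g proper closed convex, x* the unique minimizer of F = f + g. Let {x^t} be generated by the PDNM with 0 < β ≤ 1. Then ‖x^{t+1}−x*‖²_D ≤ (1 − σ/(η̄τ))‖x^t−x*‖²_D for all t ≥ 0, where σ = inf_{v≠0} vᵀQv/vᵀDv, τ = sup_{v≠0} vᵀQv/vᵀDv, and η̄ = max{1/τ, η/β}. -/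
open scoped RealInnerProductSpace

/-- The quadratic function `f(x) = (1/2)xᵀQx + lᵀx`. -/
noncomputable def fquad {n : ℕ} (Q : Matrix (Fin n) (Fin n) ℝ) (l : Fin n → ℝ)
    (x : EuclideanSpace ℝ (Fin n)) : ℝ :=
  (1:ℝ)/2 * qnorm Q x + dotProduct l (fun i => x i)

/-- Its gradient `∇f(x) = Qx + l`. -/
noncomputable def gradquad {n : ℕ} (Q : Matrix (Fin n) (Fin n) ℝ) (l : Fin n → ℝ)
    (x : EuclideanSpace ℝ (Fin n)) : EuclideanSpace ℝ (Fin n) :=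
  toE (Q.mulVec (fun i => x i) + l)

/-!
The step `x⁺` minimises `g + m` with `m(y) = ⟪∇f(x), y - x⟫ + ½‖y - x‖²_H` and `H = η^k D`, so
convexity of `g` gives the three-point inequality
`g(x⁺) + m(x⁺) + ½‖x⋆ - x⁺‖²_H ≤ g(x⋆) + m(x⋆)`.
Adding the accepted sufficient decrease (with `β ≤ 1`), the exact Taylor expansion of the
quadratic `f` at `x` and the optimality of `x⋆` leaves
`‖x⁺ - x⋆‖²_H ≤ ‖x - x⋆‖²_H - ‖x - x⋆‖²_Q ≤ (η^k - σ)‖x - x⋆‖²_D`.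
Every rejected trial `j < k` has `β η^j < τ`, hence `η^k ≤ η̄τ`.
-/

open Matrix WithLp Filter Topology

section Quadratic

variable {n : ℕ}

lemma Matrix.IsSymm.dotProduct_mulVec_comm {H : Matrix (Fin n) (Fin n) ℝ} (hH : H.IsSymm)
    (a b : Fin n → ℝ) : a ⬝ᵥ H *ᵥ b = b ⬝ᵥ H *ᵥ a := by
  rw [dotProduct_mulVec, ← mulVec_transpose, hH.eq, dotProduct_comm]

lemma inner_eq_dotProduct (a b : EuclideanSpace ℝ (Fin n)) : ⟪a, b⟫ = ofLp a ⬝ᵥ ofLp b := by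
  simp [EuclideanSpace.inner_eq_star_dotProduct, dotProduct_comm]

lemma qnorm_eq (H : Matrix (Fin n) (Fin n) ℝ) (z : EuclideanSpace ℝ (Fin n)) :
    qnorm H z = ofLp z ⬝ᵥ H *ᵥ ofLp z := rfl

lemma qnorm_add {H : Matrix (Fin n) (Fin n) ℝ} (hH : H.IsSymm) (a b : EuclideanSpace ℝ (Fin n)) :
    qnorm H (a + b) = qnorm H a + 2 * (ofLp a ⬝ᵥ H *ᵥ ofLp b) + qnorm H b := by
  simp only [qnorm_eq, ofLp_add, mulVec_add, dotProduct_add, add_dotProduct,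
    hH.dotProduct_mulVec_comm (ofLp b) (ofLp a)]
  ring

lemma qnorm_smul_matrix (c : ℝ) (H : Matrix (Fin n) (Fin n) ℝ) (z : EuclideanSpace ℝ (Fin n)) :
    qnorm (c • H) z = c * qnorm H z := by
  simp only [qnorm_eq, smul_mulVec, dotProduct_smul, smul_eq_mul]

lemma qnorm_smul (H : Matrix (Fin n) (Fin n) ℝ) (c : ℝ) (z : EuclideanSpace ℝ (Fin n)) :
    qnorm H (c • z) = c ^ 2 * qnorm H z := by
  simp only [qnorm_eq, ofLp_smul, mulVec_smul, dotProduct_smul, smul_dotProduct, smul_eq_mul]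
  ring

lemma qnorm_sub_comm (H : Matrix (Fin n) (Fin n) ℝ) (a b : EuclideanSpace ℝ (Fin n)) :
    qnorm H (a - b) = qnorm H (b - a) := by
  rw [← neg_sub b a, qnorm_eq, qnorm_eq, ofLp_neg, mulVec_neg, dotProduct_neg, neg_dotProduct,
    neg_neg]

lemma qnorm_nonneg {H : Matrix (Fin n) (Fin n) ℝ} (hH : H.PosSemidef)
    (z : EuclideanSpace ℝ (Fin n)) : 0 ≤ qnorm H z := by
  simpa [qnorm_eq] using hH.dotProduct_mulVec_nonneg (ofLp z)

lemma fquad_eq_add_inner_add_qnorm {Q : Matrix (Fin n) (Fin n) ℝ} (hQ : Q.IsSymm) (l : Fin n → ℝ)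
    (x y : EuclideanSpace ℝ (Fin n)) :
    fquad Q l y = fquad Q l x + ⟪gradquad Q l x, y - x⟫ + 1 / 2 * qnorm Q (y - x) := by
  have hy : y = x + (y - x) := by abel
  conv_lhs => rw [hy]
  rw [fquad, fquad, qnorm_add hQ, inner_eq_dotProduct, gradquad, toE]
  simp only [ofLp_add, dotProduct_add, WithLp.equiv_symm_apply, ofLp_toLp, add_dotProduct]
  rw [dotProduct_comm (Q *ᵥ ofLp x), hQ.dotProduct_mulVec_comm]
  ring

end Quadratic

section ProximalStep

variable {n : ℕ}

def SufficientDecrease (Q : Matrix (Fin n) (Fin n) ℝ) (l : Fin n → ℝ) (β : ℝ)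
    (H : Matrix (Fin n) (Fin n) ℝ) (x y : EuclideanSpace ℝ (Fin n)) : Prop :=
  fquad Q l y ≤ fquad Q l x + ⟪gradquad Q l x, y - x⟫ + β / 2 * qnorm H (y - x)

lemma SufficientDecrease.mono {Q H : Matrix (Fin n) (Fin n) ℝ} {l : Fin n → ℝ} {β β' : ℝ}
    (hH : H.PosSemidef) {x y : EuclideanSpace ℝ (Fin n)} (h : SufficientDecrease Q l β H x y)
    (hβ : β ≤ β') : SufficientDecrease Q l β' H x y := by
  unfold SufficientDecrease at *
  nlinarith [qnorm_nonneg hH (y - x)]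

noncomputable def proxModel (H : Matrix (Fin n) (Fin n) ℝ) (v x y : EuclideanSpace ℝ (Fin n)) :
    ℝ :=
  ⟪v, y - x⟫ + 1 / 2 * qnorm H (y - x)

lemma proxModel_add_smul {H : Matrix (Fin n) (Fin n) ℝ} (hH : H.IsSymm)
    (v x y d : EuclideanSpace ℝ (Fin n)) (c : ℝ) :
    proxModel H v x (y + c • d) = proxModel H v x y
      + c * (⟪v, d⟫ + ofLp (y - x) ⬝ᵥ H *ᵥ ofLp d) + c ^ 2 / 2 * qnorm H d := by
  rw [proxModel, proxModel, add_sub_right_comm, inner_add_right, inner_smul_right,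
    qnorm_add hH, qnorm_smul, ofLp_smul, mulVec_smul, dotProduct_smul, smul_eq_mul]
  ring

lemma half_qnorm_sub_eq_proxModel_add {H : Matrix (Fin n) (Fin n) ℝ} (hH : H.IsSymm)
    (hHu : IsUnit H) (v x y : EuclideanSpace ℝ (Fin n)) :
    1 / 2 * qnorm H (y - (x - toE (H⁻¹ *ᵥ ofLp v)))
      = proxModel H v x y + 1 / 2 * qnorm H (toE (H⁻¹ *ᵥ ofLp v)) := by
  have hcross : ofLp (y - x) ⬝ᵥ H *ᵥ ofLp (toE (H⁻¹ *ᵥ ofLp v)) = ⟪v, y - x⟫ := by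
    rw [toE, WithLp.equiv_symm_apply, ofLp_toLp, mulVec_mulVec,
      mul_nonsing_inv H ((isUnit_iff_isUnit_det H).mp hHu), one_mulVec, inner_eq_dotProduct,
      dotProduct_comm]
  rw [sub_sub_eq_add_sub, add_sub_right_comm, qnorm_add hH, hcross, proxModel]
  ring

lemma IsProxPt.add_proxModel_le {g : EuclideanSpace ℝ (Fin n) → EReal}
    {H : Matrix (Fin n) (Fin n) ℝ} (hH : H.IsSymm) (hHu : IsUnit H)
    {v x xp : EuclideanSpace ℝ (Fin n)} (h : IsProxPt g H (x - toE (H⁻¹ *ᵥ ofLp v)) xp)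
    (y : EuclideanSpace ℝ (Fin n)) :
    g xp + proxModel H v x xp ≤ g y + proxModel H v x y := by
  have hy := h y
  rw [half_qnorm_sub_eq_proxModel_add hH hHu, half_qnorm_sub_eq_proxModel_add hH hHu,
    EReal.coe_add, EReal.coe_add, ← add_assoc, ← add_assoc] at hy
  exact (EReal.addLECancellable_coe _).add_le_add_iff_right.mp hy

lemma three_point_inequality {g : EuclideanSpace ℝ (Fin n) → EReal} {H : Matrix (Fin n) (Fin n) ℝ}
    (hH : H.IsSymm)
    (hg : ∀ (z w : EuclideanSpace ℝ (Fin n)) (a b : ℝ), 0 ≤ a → 0 ≤ b →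
      a + b = 1 → g (a • z + b • w) ≤ (a : EReal) * g z + (b : EReal) * g w)
    {v x xp z : EuclideanSpace ℝ (Fin n)}
    (hmin : ∀ y, g xp + proxModel H v x xp ≤ g y + proxModel H v x y)
    {p s : ℝ} (hp : g xp = p) (hs : g z = s) :
    p + proxModel H v x xp + 1 / 2 * qnorm H (z - xp) ≤ s + proxModel H v x z := by
  set K := ⟪v, z - xp⟫ + ofLp (xp - x) ⬝ᵥ H *ᵥ ofLp (z - xp)
  have hz : proxModel H v x z = proxModel H v x xp + K + 1 / 2 * qnorm H (z - xp) := by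
    have h := proxModel_add_smul hH v x xp (z - xp) 1
    rwa [one_smul, add_sub_cancel, one_mul, one_pow] at h
  -- test minimality against `xp + c • (z - xp)` and let `c → 0⁺`
  have hc : ∀ c : ℝ, 0 < c → c ≤ 1 → p - s ≤ K + c / 2 * qnorm H (z - xp) := by
    intro c hc0 hc1
    have hseg : (1 - c) • xp + c • z = xp + c • (z - xp) := by module
    have hconv := hg xp z (1 - c) c (by linarith) hc0.le (by ring)
    rw [hp, hs, hseg, ← EReal.coe_mul, ← EReal.coe_mul, ← EReal.coe_add] at hconv
    have hle := (hmin _).trans (add_le_add_left hconv _)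
    rw [hp, ← EReal.coe_add, ← EReal.coe_add, EReal.coe_le_coe_iff,
      proxModel_add_smul hH] at hle
    nlinarith
  have hlim : Tendsto (fun c : ℝ => K + c / 2 * qnorm H (z - xp)) (𝓝[>] 0) (𝓝 K) := by
    have : Tendsto (fun c : ℝ => K + c / 2 * qnorm H (z - xp)) (𝓝 0) (𝓝 K) := by
      simpa using ((continuous_id.div_const 2).mul continuous_const).const_add K |>.tendsto 0
    exact this.mono_left nhdsWithin_le_nhds
  have hK : p - s ≤ K := ge_of_tendsto hlim <| by
    filter_upwards [Ioc_mem_nhdsGT zero_lt_one] with c hc' using hc c hc'.1 hc'.2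
  linarith

lemma qnorm_sub_le_of_three_point {Q H : Matrix (Fin n) (Fin n) ℝ} (hQ : Q.IsSymm)
    {l : Fin n → ℝ} {x xp xs : EuclideanSpace ℝ (Fin n)} {p s : ℝ}
    (hthree : p + proxModel H (gradquad Q l x) x xp + 1 / 2 * qnorm H (xs - xp)
      ≤ s + proxModel H (gradquad Q l x) x xs)
    (hdecr : SufficientDecrease Q l 1 H x xp)
    (hopt : fquad Q l xs + s ≤ fquad Q l xp + p) :
    qnorm H (xp - xs) ≤ qnorm H (x - xs) - qnorm Q (x - xs) := by
  have htaylor := fquad_eq_add_inner_add_qnorm hQ l x xs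
  rw [qnorm_sub_comm H xp, qnorm_sub_comm H x, qnorm_sub_comm Q x]
  simp only [proxModel, SufficientDecrease] at hthree hdecr
  linarith

end ProximalStep

section StepSize

variable {n : ℕ}

def rayleighQuotients (Q D : Matrix (Fin n) (Fin n) ℝ) : Set ℝ :=
  {r | ∃ v : Fin n → ℝ, v ≠ 0 ∧ r = v ⬝ᵥ Q *ᵥ v / v ⬝ᵥ D *ᵥ v}

variable {Q D : Matrix (Fin n) (Fin n) ℝ}

lemma pos_of_mem_rayleighQuotients (hQ : Q.PosDef) (hD : D.PosDef) {r : ℝ}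
    (hr : r ∈ rayleighQuotients Q D) : 0 < r := by
  obtain ⟨v, hv, rfl⟩ := hr
  have hQv := hQ.dotProduct_mulVec_pos hv
  have hDv := hD.dotProduct_mulVec_pos hv
  simp only [star_trivial] at hQv hDv
  positivity

lemma qnorm_eq_zero_or_div_mem_rayleighQuotients (hD : D.PosDef) (z : EuclideanSpace ℝ (Fin n)) :
    (qnorm Q z = 0 ∧ qnorm D z = 0) ∨
      (0 < qnorm D z ∧ qnorm Q z / qnorm D z ∈ rayleighQuotients Q D) := by
  by_cases hz : ofLp z = 0
  · simp [qnorm_eq, hz]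
  · refine .inr ⟨by simpa [qnorm_eq] using hD.dotProduct_mulVec_pos hz, ofLp z, hz, rfl⟩

lemma mul_qnorm_le_qnorm_of_isGLB (hD : D.PosDef) {σ : ℝ} (hσ : IsGLB (rayleighQuotients Q D) σ)
    (z : EuclideanSpace ℝ (Fin n)) : σ * qnorm D z ≤ qnorm Q z := by
  rcases qnorm_eq_zero_or_div_mem_rayleighQuotients (Q := Q) hD z with ⟨hQz, hDz⟩ | ⟨hDz, hmem⟩
  · simp [hQz, hDz]
  · exact (le_div_iff₀ hDz).mp (hσ.1 hmem)

lemma qnorm_le_mul_qnorm_of_isLUB (hD : D.PosDef) {τ : ℝ} (hτ : IsLUB (rayleighQuotients Q D) τ)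
    (z : EuclideanSpace ℝ (Fin n)) : qnorm Q z ≤ τ * qnorm D z := by
  rcases qnorm_eq_zero_or_div_mem_rayleighQuotients (Q := Q) hD z with ⟨hQz, hDz⟩ | ⟨hDz, hmem⟩
  · simp [hQz, hDz]
  · exact (div_le_iff₀ hDz).mp (hτ.1 hmem)

lemma nonneg_of_isGLB_rayleighQuotients (hQ : Q.PosDef) (hD : D.PosDef) {σ : ℝ}
    (hσ : IsGLB (rayleighQuotients Q D) σ) : 0 ≤ σ :=
  hσ.2 fun _ hr => (pos_of_mem_rayleighQuotients hQ hD hr).le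

lemma pos_of_isLUB_rayleighQuotients (hQ : Q.PosDef) (hD : D.PosDef) {τ : ℝ}
    (hτ : IsLUB (rayleighQuotients Q D) τ) : 0 < τ :=
  let ⟨_, hr⟩ := hτ.nonempty
  (pos_of_mem_rayleighQuotients hQ hD hr).trans_le (hτ.1 hr)

lemma mul_lt_of_not_sufficientDecrease (hQ : Q.IsSymm) (hD : D.PosSemidef) {τ : ℝ}
    (hτ : ∀ z, qnorm Q z ≤ τ * qnorm D z) {l : Fin n → ℝ} {β c : ℝ}
    {x y : EuclideanSpace ℝ (Fin n)} (h : ¬ SufficientDecrease Q l β (c • D) x y) :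
    β * c < τ := by
  rw [SufficientDecrease, fquad_eq_add_inner_add_qnorm hQ l x y, qnorm_smul_matrix,
    not_le] at h
  by_contra! hτc
  nlinarith [hτ (y - x), qnorm_nonneg hD (y - x)]

end StepSize

lemma pow_le_max_mul {η β τ : ℝ} (hη : 0 < η) (hβ : 0 < β) (hτ : 0 < τ) {k : ℕ}
    (h : ∀ j < k, β * η ^ j < τ) : η ^ k ≤ max (1 / τ) (η / β) * τ := by
  cases k with
  | zero =>
    calc η ^ 0 = 1 / τ * τ := by field_simp
      _ ≤ max (1 / τ) (η / β) * τ := by gcongr; exact le_max_left _ _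
  | succ j =>
    have hj : η ^ j < τ / β := by rw [lt_div_iff₀ hβ, mul_comm]; exact h j j.lt_succ_self
    calc η ^ (j + 1) = η * η ^ j := pow_succ' η j
      _ ≤ η * (τ / β) := by gcongr
      _ = η / β * τ := by ring
      _ ≤ max (1 / τ) (η / β) * τ := by gcongr; exact le_max_right _ _

lemma le_one_sub_div_mul {A B c M σ : ℝ} (hc : 0 < c) (hcM : c ≤ M) (hσ : 0 ≤ σ) (hB : 0 ≤ B)
    (h : c * A ≤ c * B - σ * B) : A ≤ (1 - σ / M) * B := by
  have hA : A ≤ (1 - σ / c) * B := by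
    rw [← mul_le_mul_iff_of_pos_left hc]
    calc c * A ≤ c * B - σ * B := h
      _ = c * ((1 - σ / c) * B) := by field_simp
  have hσM : σ / M ≤ σ / c := div_le_div_of_nonneg_left hσ hc hcM
  nlinarith

lemma EReal.exists_eq_coe_of_add_coe_le {e e' : EReal} {a b : ℝ} (h : e + a ≤ e' + b)
    (he' : e' ≠ ⊤) (he : e ≠ ⊥) : ∃ r : ℝ, e = r := by
  refine ⟨e.toReal, (EReal.coe_toReal (fun htop => ?_) he).symm⟩
  rw [htop, EReal.top_add_coe, top_le_iff] at h
  exact (EReal.add_lt_top he' (EReal.coe_ne_top b)).ne h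

theorem stmt10_general {n : ℕ} (Q : Matrix (Fin n) (Fin n) ℝ) (l : Fin n → ℝ)
    (g : EuclideanSpace ℝ (Fin n) → EReal)
    (η β σ τ : ℝ) (x : ℕ → EuclideanSpace ℝ (Fin n))
    (xcand : ℕ → ℕ → EuclideanSpace ℝ (Fin n)) (k : ℕ → ℕ)
    (xstar : EuclideanSpace ℝ (Fin n))
    (hQ : Q.PosDef)
    (hg_proper : ∃ z, g z ≠ ⊤) (hg_nebot : ∀ z, g z ≠ ⊥)
    (hg_convex : ∀ (z w : EuclideanSpace ℝ (Fin n)) (a b : ℝ), 0 ≤ a → 0 ≤ b →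
      a + b = 1 → g (a • z + b • w) ≤ (a : EReal) * g z + (b : EReal) * g w)
    (hη : 1 < η) (hβ0 : 0 < β) (hβ1 : β ≤ 1)
    (hσ : IsGLB {r : ℝ | ∃ v : Fin n → ℝ, v ≠ 0 ∧
      r = dotProduct v (Q.mulVec v) /
        dotProduct v ((Matrix.diagonal fun i => Q i i).mulVec v)} σ)
    (hτ : IsLUB {r : ℝ | ∃ v : Fin n → ℝ, v ≠ 0 ∧
      r = dotProduct v (Q.mulVec v) /
        dotProduct v ((Matrix.diagonal fun i => Q i i).mulVec v)} τ)
    (hprox : ∀ (t j : ℕ),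
      IsProxPt g (η ^ j • Matrix.diagonal fun i => Q i i)
        (x t - toE ((η ^ j • Matrix.diagonal fun i => Q i i)⁻¹.mulVec
          fun i => gradquad Q l (x t) i)) (xcand t j))
    (hstep : ∀ t : ℕ, x (t + 1) = xcand t (k t))
    (haccept : ∀ t : ℕ,
      fquad Q l (xcand t (k t)) ≤ fquad Q l (x t)
        + ⟪gradquad Q l (x t), xcand t (k t) - x t⟫
        + β / 2 * qnorm (η ^ k t • Matrix.diagonal fun i => Q i i)
            (xcand t (k t) - x t))
    (hsmallest : ∀ (t : ℕ), ∀ j < k t,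
      ¬ (fquad Q l (xcand t j) ≤ fquad Q l (x t)
        + ⟪gradquad Q l (x t), xcand t j - x t⟫
        + β / 2 * qnorm (η ^ j • Matrix.diagonal fun i => Q i i) (xcand t j - x t)))
    (hopt : ∀ y, (fquad Q l xstar : EReal) + g xstar ≤ (fquad Q l y : EReal) + g y) :
    ∀ t : ℕ, qnorm (Matrix.diagonal fun i => Q i i) (x (t + 1) - xstar)
      ≤ (1 - σ / (max (1 / τ) (η / β) * τ)) *
        qnorm (Matrix.diagonal fun i => Q i i) (x t - xstar) := by
  intro t
  set D := Matrix.diagonal fun i => Q i i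
  set c := η ^ k t
  have hQs : Q.IsSymm := isHermitian_iff_isSymm.mp hQ.1
  have hD : D.PosDef := posDef_diagonal_iff.mpr fun _ => hQ.diag_pos
  have hc : 0 < c := pow_pos (by linarith) _
  have hH : (c • D).PosDef := hD.smul hc
  have hcM : c ≤ max (1 / τ) (η / β) * τ :=
    pow_le_max_mul (by linarith) hβ0 (pos_of_isLUB_rayleighQuotients hQ hD hτ) fun j hj =>
      mul_lt_of_not_sufficientDecrease hQs hD.posSemidef (qnorm_le_mul_qnorm_of_isLUB hD hτ)
        (hsmallest t j hj)
  have hmin := (hprox t (k t)).add_proxModel_le (isHermitian_iff_isSymm.mp hH.1) hH.isUnit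
  obtain ⟨z0, hz0⟩ := hg_proper
  obtain ⟨s, hs⟩ := EReal.exists_eq_coe_of_add_coe_le
    ((add_comm _ _).trans_le ((hopt z0).trans_eq (add_comm _ _))) hz0 (hg_nebot xstar)
  obtain ⟨p, hp⟩ := EReal.exists_eq_coe_of_add_coe_le
    ((hmin xstar).trans_eq (by rw [hs])) (EReal.coe_ne_top s) (hg_nebot _)
  have hopt_real : fquad Q l xstar + s ≤ fquad Q l (xcand t (k t)) + p := by
    have h := hopt (xcand t (k t))
    rwa [hs, hp, ← EReal.coe_add, ← EReal.coe_add, EReal.coe_le_coe_iff] at h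
  have hdescent := qnorm_sub_le_of_three_point hQs
    (three_point_inequality (isHermitian_iff_isSymm.mp hH.1) hg_convex hmin hp hs)
    (SufficientDecrease.mono hH.posSemidef (haccept t) hβ1) hopt_real
  rw [← hstep, qnorm_smul_matrix, qnorm_smul_matrix] at hdescent
  exact le_one_sub_div_mul hc hcM (nonneg_of_isGLB_rayleighQuotients hQ hD hσ)
    (qnorm_nonneg hD.posSemidef _) (by linarith [mul_qnorm_le_qnorm_of_isGLB hD hσ (x t - xstar)])

/-- Q-linear convergence of PDNM for strongly convex quadratic `f`:
`‖x^{t+1}−x*‖²_D ≤ (1 − σ/(η̄τ))‖x^t−x*‖²_D`, where `η̄ = max{1/τ, η/β}`. -/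
theorem stmt10 {n : ℕ} (Q : Matrix (Fin n) (Fin n) ℝ) (l : Fin n → ℝ)
    (g : EuclideanSpace ℝ (Fin n) → EReal)
    (η β σ τ : ℝ) (x : ℕ → EuclideanSpace ℝ (Fin n))
    (xcand : ℕ → ℕ → EuclideanSpace ℝ (Fin n)) (k : ℕ → ℕ)
    (xstar : EuclideanSpace ℝ (Fin n))
    (hQ : Q.PosDef)
    (hg_proper : ∃ z, g z ≠ ⊤) (hg_nebot : ∀ z, g z ≠ ⊥)
    (hg_closed : LowerSemicontinuous g)
    (hg_convex : ∀ (z w : EuclideanSpace ℝ (Fin n)) (a b : ℝ), 0 ≤ a → 0 ≤ b →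
      a + b = 1 → g (a • z + b • w) ≤ (a : EReal) * g z + (b : EReal) * g w)
    (hη : 1 < η) (hβ0 : 0 < β) (hβ1 : β ≤ 1)
    (hσ : IsGLB {r : ℝ | ∃ v : Fin n → ℝ, v ≠ 0 ∧
      r = dotProduct v (Q.mulVec v) /
        dotProduct v ((Matrix.diagonal fun i => Q i i).mulVec v)} σ)
    (hτ : IsLUB {r : ℝ | ∃ v : Fin n → ℝ, v ≠ 0 ∧
      r = dotProduct v (Q.mulVec v) /
        dotProduct v ((Matrix.diagonal fun i => Q i i).mulVec v)} τ)
    (hprox : ∀ (t j : ℕ),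
      IsProxPt g (η ^ j • Matrix.diagonal fun i => Q i i)
        (x t - toE ((η ^ j • Matrix.diagonal fun i => Q i i)⁻¹.mulVec
          fun i => gradquad Q l (x t) i)) (xcand t j))
    (hstep : ∀ t : ℕ, x (t + 1) = xcand t (k t))
    (haccept : ∀ t : ℕ,
      fquad Q l (xcand t (k t)) ≤ fquad Q l (x t)
        + ⟪gradquad Q l (x t), xcand t (k t) - x t⟫
        + β / 2 * qnorm (η ^ k t • Matrix.diagonal fun i => Q i i)
            (xcand t (k t) - x t))
    (hsmallest : ∀ (t : ℕ), ∀ j < k t,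
      ¬ (fquad Q l (xcand t j) ≤ fquad Q l (x t)
        + ⟪gradquad Q l (x t), xcand t j - x t⟫
        + β / 2 * qnorm (η ^ j • Matrix.diagonal fun i => Q i i) (xcand t j - x t)))
    (hopt : ∀ y, (fquad Q l xstar : EReal) + g xstar ≤ (fquad Q l y : EReal) + g y)
    (huniq : ∀ z : EuclideanSpace ℝ (Fin n),
      (∀ y, (fquad Q l z : EReal) + g z ≤ (fquad Q l y : EReal) + g y) → z = xstar) :
    ∀ t : ℕ, qnorm (Matrix.diagonal fun i => Q i i) (x (t + 1) - xstar)
      ≤ (1 - σ / (max (1 / τ) (η / β) * τ)) *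
        qnorm (Matrix.diagonal fun i => Q i i) (x t - xstar) :=
  stmt10_general Q l g η β σ τ x xcand k xstar hQ hg_proper hg_nebot hg_convex hη hβ0 hβ1 hσ hτ
    hprox hstep haccept hsmallest hopt
end

section
/- Let λ > 0, a > 0, d > 0, and consider the one-dimensional scaled proximal problem min_{y∈ℝ} { λ·min{a|y|, 1} + (d/2)(y − x)² }. Then the minimum value equals min{ P₁(x), λ } where P₁(x) = (d/2)x² if |x| ≤ λa/d and P₁(x) = λa|x| − (λa)²/(2d) if |x| > λa/d; moreover P₁(x) is attained at the soft-threshold S_{λa/d}(x) = sign(x)(|x| − λa/d)₊, and the second term λ is attained at y = x. -/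
/-!
Since `λ > 0`, `λ·min{a|y|, 1} = min{λa|y|, λ}`, so the objective is the pointwise minimum of the
ℓ₁-prox objective `λa|y| + (d/2)(y − x)²` and of `λ + (d/2)(y − x)²`, and its least value is the
smaller of their least values. The second is `λ`, at `y = x`. The first is the Huber function `P₁`:
for `|x| ≤ c := λa/d` it follows from `d·x·y ≤ d|x||y| ≤ λa|y|`, and for `|x| > c` from
`λa|x| ≤ λa|y| + λa|y − x|` together with `λa·t − (λa)²/(2d) ≤ (d/2)t²`; the soft threshold
`S_c(x)` attains it.
-/

open Set

noncomputable section

def softThreshold (c x : ℝ) : ℝ := Real.sign x * max (|x| - c) 0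

/-- `P₁` of the statement with `μ = λa`: the Moreau envelope of `μ|·|` in the metric `d`. -/
def huber (μ d x : ℝ) : ℝ :=
  if |x| ≤ μ / d then d / 2 * x ^ 2 else μ * |x| - μ ^ 2 / (2 * d)

end

theorem IsLeast.range_min {ι α : Type*} [LinearOrder α] {f g : ι → α} {a b : α}
    (hf : IsLeast (range f) a) (hg : IsLeast (range g) b) :
    IsLeast (range fun i => min (f i) (g i)) (min a b) := by
  obtain ⟨⟨i, rfl⟩, hfi⟩ := hf
  obtain ⟨⟨j, rfl⟩, hgj⟩ := hg
  refine ⟨?_, ?_⟩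
  · rcases le_total (f i) (g j) with h | h
    · exact ⟨i, (min_eq_left (h.trans (hgj ⟨i, rfl⟩))).trans (min_eq_left h).symm⟩
    · exact ⟨j, (min_eq_right (h.trans (hfi ⟨j, rfl⟩))).trans (min_eq_right h).symm⟩
  · rintro _ ⟨k, rfl⟩
    exact min_le_min (hfi ⟨k, rfl⟩) (hgj ⟨k, rfl⟩)

section Prox

variable {μ d : ℝ}

theorem abs_softThreshold_and_sub_self_of_lt_abs {c x : ℝ} (hc : 0 ≤ c) (h : c < |x|) :
    |softThreshold c x| = |x| - c ∧ softThreshold c x - x = -(Real.sign x * c) := by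
  rw [softThreshold, max_eq_left (by linarith)]
  rcases lt_trichotomy x 0 with hx | rfl | hx
  · rw [abs_of_neg hx] at h ⊢
    rw [Real.sign_of_neg hx, abs_of_nonpos (by linarith)]
    constructor <;> ring
  · simp at h; linarith
  · rw [abs_of_pos hx] at h ⊢
    rw [Real.sign_of_pos hx, abs_of_nonneg (by linarith)]
    constructor <;> ring

theorem l1_prox_objective_softThreshold (hμ : 0 ≤ μ) (hd : 0 < d) (x : ℝ) :
    μ * |softThreshold (μ / d) x| + d / 2 * (softThreshold (μ / d) x - x) ^ 2 = huber μ d x := by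
  unfold huber
  split_ifs with h
  · simp [softThreshold, max_eq_right (sub_nonpos.mpr h)]
  · have hc : 0 ≤ μ / d := div_nonneg hμ hd.le
    obtain ⟨habs, hsub⟩ := abs_softThreshold_and_sub_self_of_lt_abs hc (not_le.mp h)
    have hx : x ≠ 0 := by rintro rfl; simp at h; linarith
    have hsign : Real.sign x ^ 2 = 1 := by
      rcases Real.sign_apply_eq_of_ne_zero x hx with h' | h' <;> simp [h']
    rw [habs, hsub, neg_sq, mul_pow, hsign]
    field_simp
    ring

theorem huber_le_l1_prox_objective (hμ : 0 ≤ μ) (hd : 0 < d) (x y : ℝ) :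
    huber μ d x ≤ μ * |y| + d / 2 * (y - x) ^ 2 := by
  unfold huber
  split_ifs with h
  · have hxy : d * (x * y) ≤ μ * |y| := by
      calc d * (x * y) ≤ d * (|x| * |y|) := by
            rw [← abs_mul]; exact mul_le_mul_of_nonneg_left (le_abs_self _) hd.le
        _ ≤ d * (μ / d * |y|) := by gcongr
        _ = μ * |y| := by field_simp
    nlinarith [sq_nonneg y]
  · have htri : |x| ≤ |y| + |y - x| := by
      simpa [abs_sub_comm, add_comm] using abs_sub_abs_le_abs_sub x y
    have hquad : μ * |y - x| - μ ^ 2 / (2 * d) ≤ d / 2 * (y - x) ^ 2 := by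
      have hsq : 0 ≤ (d * |y - x| - μ) ^ 2 / (2 * d) := by positivity
      have hexp : (d * |y - x| - μ) ^ 2 / (2 * d)
          = d / 2 * (y - x) ^ 2 - (μ * |y - x| - μ ^ 2 / (2 * d)) := by
        rw [← sq_abs (y - x)]; field_simp; ring
      linarith
    nlinarith [mul_le_mul_of_nonneg_left htri hμ]

theorem isLeast_l1_prox (hμ : 0 ≤ μ) (hd : 0 < d) (x : ℝ) :
    IsLeast (range fun y => μ * |y| + d / 2 * (y - x) ^ 2) (huber μ d x) :=
  ⟨⟨_, l1_prox_objective_softThreshold hμ hd x⟩,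
    by rintro _ ⟨y, rfl⟩; exact huber_le_l1_prox_objective hμ hd x y⟩

theorem isLeast_const_add_sq (lam : ℝ) (hd : 0 < d) (x : ℝ) :
    IsLeast (range fun y => lam + d / 2 * (y - x) ^ 2) lam :=
  ⟨⟨x, by simp⟩, by rintro _ ⟨y, rfl⟩; simp only [le_add_iff_nonneg_right]; positivity⟩

end Prox

/-- the one-dimensional scaled prox problem of the capped ℓ₁ penalty,
`min_y { λ·min{a|y|,1} + (d/2)(y−x)² }`, has minimum value `min{P₁(x), λ}`, where
`P₁(x) = (d/2)x²` if `|x| ≤ λa/d` and `P₁(x) = λa|x| − (λa)²/(2d)` otherwise;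
`P₁(x)` is the minimum of `y ↦ λa|y| + (d/2)(y−x)²`, attained at the soft threshold
`S_{λa/d}(x)`, and the value `λ` is attained (for the second branch) at `y = x`. -/
theorem stmt15 (lam a d x : ℝ) (hlam : 0 < lam) (ha : 0 < a) (hd : 0 < d) :
    (IsLeast
      (Set.range fun y : ℝ => lam * min (a * |y|) 1 + d / 2 * (y - x) ^ 2)
      (min (if |x| ≤ lam * a / d then d / 2 * x ^ 2
            else lam * a * |x| - (lam * a) ^ 2 / (2 * d)) lam)) ∧
    (IsLeast
      (Set.range fun y : ℝ => lam * a * |y| + d / 2 * (y - x) ^ 2)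
      (if |x| ≤ lam * a / d then d / 2 * x ^ 2
       else lam * a * |x| - (lam * a) ^ 2 / (2 * d))) ∧
    (lam * a * |Real.sign x * max (|x| - lam * a / d) 0|
        + d / 2 * (Real.sign x * max (|x| - lam * a / d) 0 - x) ^ 2
      = if |x| ≤ lam * a / d then d / 2 * x ^ 2
        else lam * a * |x| - (lam * a) ^ 2 / (2 * d)) ∧
    (lam * 1 + d / 2 * (x - x) ^ 2 = lam) := by
  have hμ : 0 ≤ lam * a := by positivity
  have hl1 : IsLeast (range fun y => lam * a * |y| + d / 2 * (y - x) ^ 2) (huber (lam * a) d x) :=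
    isLeast_l1_prox hμ hd x
  have hcapped : (fun y : ℝ => lam * min (a * |y|) 1 + d / 2 * (y - x) ^ 2) =
      fun y => min (lam * a * |y| + d / 2 * (y - x) ^ 2) (lam + d / 2 * (y - x) ^ 2) := by
    ext y
    rw [mul_min_of_nonneg _ _ hlam.le, min_add_add_right, mul_assoc, mul_one]
  refine ⟨?_, hl1, l1_prox_objective_softThreshold hμ hd x, by ring⟩
  rw [hcapped]
  exact hl1.range_min (isLeast_const_add_sq lam hd x)
end

section
/- Let λ > 0, x ∈ ℝⁿ, D = diag(d₁,…,dₙ) with dᵢ > 0, K ∈ {0,…,n}, and g₂(y) = min over Λ ⊂ [n] with |Λ| = n−K of Σ_{i∈Λ}|yᵢ| (the trimmed ℓ₁ norm). Then min_y { λg₂(y) + (1/2)‖y−x‖²_D } = min over Λ ⊂ [n], |Λ| = n−K of Σ_{i∈Λ} φ(xᵢ, dᵢ), where φ(xᵢ, dᵢ) = (dᵢ/2)xᵢ² if |xᵢ| ≤ λ/dᵢ and φ(xᵢ, dᵢ) = λ|xᵢ| − λ²/(2dᵢ) if |xᵢ| > λ/dᵢ. -/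
/-!
Both sides are minima over index sets `Λ` with `|Λ| = n - K`, and the two minimizations
(over `y` and over `Λ`) commute. For fixed `Λ`, the objective
`λ ∑_{i∈Λ} |yᵢ| + ½‖y - x‖²_D` decouples coordinatewise: off `Λ` the best choice is
`yᵢ = xᵢ`, and on `Λ` the one-dimensional problem `min_y λ|y| + (dᵢ/2)(y - xᵢ)²` has value
`φ(xᵢ, dᵢ)` (here `absProxValue`), attained by soft-thresholding.
-/

noncomputable section

def absProxValue (lam d x : ℝ) : ℝ :=
  if |x| ≤ lam / d then d / 2 * x ^ 2 else lam * |x| - lam ^ 2 / (2 * d)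

lemma absProxValue_le (lam : ℝ) {d : ℝ} (hd : 0 < d) (x y : ℝ) :
    absProxValue lam d x ≤ lam * |y| + d / 2 * (y - x) ^ 2 := by
  unfold absProxValue
  split_ifs with h
  · have hxd : |x| * d ≤ lam := (le_div_iff₀ hd).mp h
    have hxy : x * y ≤ |x| * |y| := abs_mul x y ▸ le_abs_self (x * y)
    nlinarith [mul_le_mul_of_nonneg_right hxd (abs_nonneg y),
      mul_le_mul_of_nonneg_left hxy hd.le, mul_nonneg hd.le (sq_nonneg y)]
  · have htri : lam * (|x| - |y|) ≤ |lam| * |y - x| := by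
      calc lam * (|x| - |y|) ≤ |lam| * |(|x| - |y|)| := by
            rw [← abs_mul]; exact le_abs_self _
        _ ≤ |lam| * |y - x| := by
            rw [abs_sub_comm y x]
            exact mul_le_mul_of_nonneg_left (abs_abs_sub_abs_le_abs_sub x y) (abs_nonneg lam)
    have hamgm : |lam| * |y - x| ≤ lam ^ 2 / (2 * d) + d / 2 * (y - x) ^ 2 := by
      rw [← sq_abs (y - x), ← sq_abs lam, div_add' _ _ _ (by positivity),
        le_div_iff₀ (by positivity)]
      nlinarith [sq_nonneg (|lam| - d * |y - x|)]
    linarith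

lemma isLeast_absProxValue (lam : ℝ) {d : ℝ} (hd : 0 < d) (x : ℝ) :
    IsLeast (Set.range fun y => lam * |y| + d / 2 * (y - x) ^ 2) (absProxValue lam d x) := by
  refine ⟨?_, Set.forall_mem_range.2 (absProxValue_le lam hd x)⟩
  unfold absProxValue
  split_ifs with h
  · exact ⟨0, by simp⟩
  rw [not_le] at h
  rcases le_or_gt 0 x with hx | hx
  · refine ⟨x - lam / d, ?_⟩
    rw [abs_of_nonneg hx] at h ⊢
    dsimp only
    rw [abs_of_pos (by linarith)]
    field_simp; ring
  · refine ⟨x + lam / d, ?_⟩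
    rw [abs_of_neg hx] at h ⊢
    dsimp only
    rw [abs_of_neg (by linarith)]
    field_simp; ring

def minOverCard {ι : Type*} (m : ℕ) (f : Finset ι → ℝ) : ℝ :=
  sInf {s | ∃ Λ : Finset ι, Λ.card = m ∧ s = f Λ}

lemma isLeast_minOverCard {ι : Type*} [Fintype ι] {m : ℕ} (hm : m ≤ Fintype.card ι)
    (f : Finset ι → ℝ) :
    IsLeast {s | ∃ Λ : Finset ι, Λ.card = m ∧ s = f Λ} (minOverCard m f) := by
  have hfin : {s | ∃ Λ : Finset ι, Λ.card = m ∧ s = f Λ}.Finite :=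
    (Set.finite_range f).subset fun _ ⟨Λ, _, hs⟩ => ⟨Λ, hs.symm⟩
  obtain ⟨Λ, -, hΛ⟩ := Finset.exists_subset_card_eq (s := Finset.univ) (by simpa using hm)
  exact ⟨Set.Nonempty.csInf_mem ⟨_, Λ, hΛ, rfl⟩ hfin, fun _ hs => csInf_le hfin.bddBelow hs⟩

section WeightedProx

variable {ι : Type*} [Fintype ι] (lam : ℝ) {d : ι → ℝ} (hd : ∀ i, 0 < d i) (x : ι → ℝ)
include hd

lemma sum_absProxValue_le (Λ : Finset ι) (y : ι → ℝ) :
    ∑ i ∈ Λ, absProxValue lam (d i) (x i)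
      ≤ lam * ∑ i ∈ Λ, |y i| + 1 / 2 * ∑ i, d i * (y i - x i) ^ 2 := by
  calc ∑ i ∈ Λ, absProxValue lam (d i) (x i)
      ≤ ∑ i ∈ Λ, (lam * |y i| + d i / 2 * (y i - x i) ^ 2) :=
        Finset.sum_le_sum fun i _ => absProxValue_le lam (hd i) (x i) (y i)
    _ = lam * ∑ i ∈ Λ, |y i| + ∑ i ∈ Λ, d i / 2 * (y i - x i) ^ 2 := by
        rw [Finset.sum_add_distrib, Finset.mul_sum]
    _ ≤ lam * ∑ i ∈ Λ, |y i| + ∑ i, d i / 2 * (y i - x i) ^ 2 :=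
        (add_le_add_iff_left _).2 <| Finset.sum_le_sum_of_subset_of_nonneg (Finset.subset_univ Λ)
          fun i _ _ => by have := hd i; positivity
    _ = lam * ∑ i ∈ Λ, |y i| + 1 / 2 * ∑ i, d i * (y i - x i) ^ 2 := by
        congr 1
        rw [Finset.mul_sum]
        exact Finset.sum_congr rfl fun i _ => by ring

lemma exists_sum_absProxValue_eq (Λ : Finset ι) :
    ∃ y : ι → ℝ, lam * ∑ i ∈ Λ, |y i| + 1 / 2 * ∑ i, d i * (y i - x i) ^ 2
      = ∑ i ∈ Λ, absProxValue lam (d i) (x i) := by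
  classical
  choose p hp using fun i => (isLeast_absProxValue lam (hd i) (x i)).1
  refine ⟨fun i => if i ∈ Λ then p i else x i, ?_⟩
  have hsq : ∑ i, d i * ((if i ∈ Λ then p i else x i) - x i) ^ 2
      = ∑ i ∈ Λ, d i * (p i - x i) ^ 2 := by
    rw [← Finset.sum_subset (Finset.subset_univ Λ) fun i _ hi => by simp [hi]]
    exact Finset.sum_congr rfl fun i hi => by simp [hi]
  have habs : ∑ i ∈ Λ, |if i ∈ Λ then p i else x i| = ∑ i ∈ Λ, |p i| :=
    Finset.sum_congr rfl fun i hi => by simp [hi]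
  calc _ = ∑ i ∈ Λ, (lam * |p i| + d i / 2 * (p i - x i) ^ 2) := by
        rw [hsq, habs, Finset.sum_add_distrib, Finset.mul_sum, Finset.mul_sum]
        congr 1
        exact Finset.sum_congr rfl fun i _ => by ring
    _ = _ := Finset.sum_congr rfl fun i _ => hp i

lemma minOverCard_absProxValue_le {m : ℕ} (hm : m ≤ Fintype.card ι) (y : ι → ℝ) :
    minOverCard m (fun Λ => ∑ i ∈ Λ, absProxValue lam (d i) (x i))
      ≤ lam * minOverCard m (fun Λ => ∑ i ∈ Λ, |y i|)
        + 1 / 2 * ∑ i, d i * (y i - x i) ^ 2 := by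
  obtain ⟨Λ, hΛ, htrim⟩ := (isLeast_minOverCard hm fun Λ => ∑ i ∈ Λ, |y i|).1
  rw [htrim]
  exact ((isLeast_minOverCard hm _).2 ⟨Λ, hΛ, rfl⟩).trans (sum_absProxValue_le lam hd x Λ y)

lemma exists_objective_eq_minOverCard_absProxValue (hlam : 0 ≤ lam) {m : ℕ}
    (hm : m ≤ Fintype.card ι) :
    ∃ y : ι → ℝ,
      lam * minOverCard m (fun Λ => ∑ i ∈ Λ, |y i|) + 1 / 2 * ∑ i, d i * (y i - x i) ^ 2
        = minOverCard m (fun Λ => ∑ i ∈ Λ, absProxValue lam (d i) (x i)) := by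
  obtain ⟨⟨Λ, hΛ, hmin⟩, -⟩ := isLeast_minOverCard hm
    fun Λ => ∑ i ∈ Λ, absProxValue lam (d i) (x i)
  obtain ⟨y, hy⟩ := exists_sum_absProxValue_eq lam hd x Λ
  refine ⟨y, le_antisymm ?_ (minOverCard_absProxValue_le lam hd x hm y)⟩
  calc _ ≤ lam * ∑ i ∈ Λ, |y i| + 1 / 2 * ∑ i, d i * (y i - x i) ^ 2 := by
        gcongr
        exact (isLeast_minOverCard hm _).2 ⟨Λ, hΛ, rfl⟩
    _ = _ := hy.trans hmin.symm

end WeightedProx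

end

theorem stmt17_general {n : ℕ} (lam : ℝ) (x d : Fin n → ℝ) (K : ℕ)
    (hlam : 0 < lam) (hd : ∀ i, 0 < d i) :
    IsLeast
      {v : ℝ | ∃ y : Fin n → ℝ,
        v = lam * sInf {s : ℝ | ∃ Λ : Finset (Fin n), Λ.card = n - K ∧
              s = ∑ i ∈ Λ, |y i|}
          + (1:ℝ)/2 * ∑ i, d i * (y i - x i) ^ 2}
      (sInf {s : ℝ | ∃ Λ : Finset (Fin n), Λ.card = n - K ∧
        s = ∑ i ∈ Λ, (if |x i| ≤ lam / d i then d i / 2 * x i ^ 2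
              else lam * |x i| - lam ^ 2 / (2 * d i))}) := by
  have hcard : n - K ≤ Fintype.card (Fin n) := by simp
  show IsLeast {v | ∃ y : Fin n → ℝ, v = lam * minOverCard (n - K) (fun Λ => ∑ i ∈ Λ, |y i|)
      + 1 / 2 * ∑ i, d i * (y i - x i) ^ 2}
    (minOverCard (n - K) fun Λ => ∑ i ∈ Λ, absProxValue lam (d i) (x i))
  obtain ⟨y, hy⟩ := exists_objective_eq_minOverCard_absProxValue lam hd x hlam.le hcard
  exact ⟨⟨y, hy.symm⟩, fun v ⟨y, hv⟩ => hv ▸ minOverCard_absProxValue_le lam hd x hcard y⟩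

/-- the scaled proximal value of the trimmed ℓ₁ norm
`g₂(y) = min_{|Λ| = n−K} Σ_{i∈Λ}|yᵢ|` with positive diagonal metric `D`:
`min_y { λg₂(y) + (1/2)‖y−x‖²_D } = min_{|Λ| = n−K} Σ_{i∈Λ} φ(xᵢ, dᵢ)`, where
`φ(xᵢ,dᵢ)` is the one-dimensional prox value of the absolute value. -/
theorem stmt17 {n : ℕ} (lam : ℝ) (x d : Fin n → ℝ) (K : ℕ)
    (hlam : 0 < lam) (hd : ∀ i, 0 < d i) (hK : K ≤ n) :
    IsLeast
      {v : ℝ | ∃ y : Fin n → ℝ,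
        v = lam * sInf {s : ℝ | ∃ Λ : Finset (Fin n), Λ.card = n - K ∧
              s = ∑ i ∈ Λ, |y i|}
          + (1:ℝ)/2 * ∑ i, d i * (y i - x i) ^ 2}
      (sInf {s : ℝ | ∃ Λ : Finset (Fin n), Λ.card = n - K ∧
        s = ∑ i ∈ Λ, (if |x i| ≤ lam / d i then d i / 2 * x i ^ 2
              else lam * |x i| - lam ^ 2 / (2 * d i))}) :=
  stmt17_general lam x d K hlam hd
end
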